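/- Fix γ > 0 and let n satisfy γ·(2n−1) > 1 (so that the connectivity bound forces min cuts of size at least 2 on clusters of 2n nodes). If a network N contains a component consisting of two disjoint n-cliques A and B joined by a single edge, then in every CPM(γ)-optimal clustering of N, every cluster intersecting this component is a subset of A or of B, and in fact A and B are each returned as clusters. Thus CPM(γ) satisfies the Pair-of-Cliques axiom. -/

import Mathlib

open Finset
open scoped Classical

/-- Edges of `E` lying inside the vertex set `c`. -/
noncomputable def inEdges {V : Type*} [DecidableEq V]
    (E : Finset (Sym2 V)) (c : Finset V) : Finset (Sym2 V) :=
  E.filter (fun e => ∀ v ∈ e, v ∈ c)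

/-- The CPM(γ) score of a clustering `P` of the graph with edge set `E`. -/
noncomputable def cpm {V : Type*} [Fintype V] [DecidableEq V] (γ : ℝ)
    (E : Finset (Sym2 V)) (P : Finpartition (univ : Finset V)) : ℝ :=
  ∑ c ∈ P.parts, (((inEdges E c).card : ℝ) - γ * (c.card.choose 2))


/-- The clique edge set on a vertex set `c`. -/
noncomputable def cliqueEdges {V : Type*} [Fintype V] [DecidableEq V]
    (c : Finset V) : Finset (Sym2 V) :=
  univ.filter (fun e : Sym2 V => ¬ e.IsDiag ∧ ∀ v ∈ e, v ∈ c)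


/-!
Compare an optimal clustering `Γ` with the clustering in which `A` and `B` are clusters and
`A ∪ B` is removed from every other cluster. If a cluster of `Γ` meets `A` in `x`, `B` in `y` and
the rest of the network in `z` vertices, the comparison clustering scores at least the mixing cost
`(1 - γ) (x (n - x) + y (n - y)) + γ (x y + (x + y) z)` more, up to the bridge `a₀b₀`, which is
the only edge it can lose. If the bridge lies inside a cluster of `Γ`, then `x, y ≥ 1` for that
cluster and `γ (2n - 1) > 1` makes its mixing cost exceed `1`. Otherwise optimality forces the
mixing cost of the clusters of `a₀` and `b₀` to vanish, so they are `A` and `B`.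
-/

namespace Nat

lemma choose_two_add (x y : ℕ) : (x + y).choose 2 = x.choose 2 + y.choose 2 + x * y := by
  induction y with
  | zero => simp
  | succ y ih =>
    rw [← add_assoc, choose_succ_succ', choose_one_right, ih, choose_succ_succ' y,
      choose_one_right]
    ring

lemma sum_choose_two_le {ι : Type*} (s : Finset ι) (f : ι → ℕ) :
    ∑ i ∈ s, (f i).choose 2 ≤ (∑ i ∈ s, f i).choose 2 := by
  induction s using Finset.cons_induction with
  | empty => simp
  | cons a s ha ih =>
    rw [sum_cons, sum_cons, choose_two_add]
    omega

lemma sum_choose_two_add_mul_le {ι : Type*} [DecidableEq ι] {s : Finset ι} (f : ι → ℕ)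
    {i₀ : ι} (hi₀ : i₀ ∈ s) :
    ∑ i ∈ s, (f i).choose 2 + f i₀ * (∑ i ∈ s, f i - f i₀) ≤ (∑ i ∈ s, f i).choose 2 := by
  rw [← add_sum_erase s _ hi₀, ← add_sum_erase s _ hi₀, Nat.add_sub_cancel_left,
    choose_two_add]
  have := sum_choose_two_le (s.erase i₀) f
  omega

end Nat

lemma card_eq_card_inter_add_card_inter_add_card_sdiff {V : Type*} [DecidableEq V]
    {A B : Finset V} (hAB : Disjoint A B) (c : Finset V) :
    #c = #(c ∩ A) + #(c ∩ B) + #(c \ (A ∪ B)) := by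
  rw [← card_inter_add_card_sdiff c (A ∪ B), inter_union_distrib_left,
    card_union_of_disjoint (hAB.mono inter_subset_right inter_subset_right)]

namespace Finpartition

variable {α : Type*} [DecidableEq α]

lemma sum_extend [Lattice α] [OrderBot α] [IsModularLattice α] {M : Type*} [AddCommMonoid M]
    {a b c : α} (P : Finpartition a) (hb : b ≠ ⊥) (hab : Disjoint a b) (hc : a ⊔ b = c)
    (f : α → M) :
    ∑ p ∈ (P.extend hb hab hc).parts, f p = f b + ∑ p ∈ P.parts, f p :=
  sum_insert fun h ↦ hb <| hab.symm.eq_bot_of_le <| P.le h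

lemma sum_card_inter {s t : Finset α} (P : Finpartition s) (ht : t ⊆ s) :
    ∑ c ∈ P.parts, #(c ∩ t) = #t := by
  rw [← (P.restrict ht).sum_card_parts]
  exact (P.sum_restrict ht card card_empty).symm

lemma sum_choose_two_card_inter_add_le {s t c : Finset α} (P : Finpartition s) (ht : t ⊆ s)
    (hc : c ∈ P.parts) :
    ∑ d ∈ P.parts, ((#(d ∩ t)).choose 2 : ℝ) + #(c ∩ t) * (#t - #(c ∩ t)) ≤ (#t).choose 2 := by
  have h := Nat.sum_choose_two_add_mul_le (fun d ↦ #(d ∩ t)) hc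
  rw [P.sum_card_inter ht] at h
  have hct : #(c ∩ t) ≤ #t := card_le_card inter_subset_right
  exact_mod_cast h

lemma sum_ite_mem_and_mem {M : Type*} [AddCommMonoidWithOne M] {s : Finset α}
    (P : Finpartition s) {a : α} (ha : a ∈ s) (b : α) :
    ∑ c ∈ P.parts, (if a ∈ c ∧ b ∈ c then (1 : M) else 0) = if b ∈ P.part a then 1 else 0 := by
  rw [sum_eq_single_of_mem _ (P.part_mem.2 ha)]
  · simp [P.mem_part_self.2 ha]
  · rintro c hc hne
    exact if_neg fun h ↦ hne (P.part_eq_of_mem hc h.1).symm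

variable [Fintype α]

/-- `A` and `B` as clusters, and every other cluster of `P` with `A ∪ B` removed. -/
def separate (P : Finpartition (univ : Finset α)) {A B : Finset α} (hAB : Disjoint A B)
    (hA : A.Nonempty) (hB : B.Nonempty) : Finpartition (univ : Finset α) :=
  ((P.restrict (subset_univ (A ∪ B)ᶜ)).extend hA.ne_empty
      (disjoint_compl_left.mono_right subset_union_left)
      (by ext v; have := fun h : v ∈ A ↦ disjoint_left.1 hAB h; simp; tauto)).extend
    hB.ne_empty disjoint_compl_left compl_sup_eq_top

lemma sum_parts_separate {M : Type*} [AddCommMonoid M] (P : Finpartition (univ : Finset α))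
    {A B : Finset α} (hAB : Disjoint A B) (hA : A.Nonempty) (hB : B.Nonempty)
    (f : Finset α → M) (hf : f ∅ = 0) :
    ∑ p ∈ (P.separate hAB hA hB).parts, f p = f A + f B + ∑ c ∈ P.parts, f (c \ (A ∪ B)) := by
  rw [separate, sum_extend, sum_extend, sum_restrict _ _ _ hf]
  simp only [sdiff_eq_inter_compl]
  abel

end Finpartition

section Edges

variable {V : Type*} [DecidableEq V]

lemma mem_inEdges {E : Finset (Sym2 V)} {c : Finset V} {e : Sym2 V} :
    e ∈ inEdges E c ↔ e ∈ E ∧ ∀ v ∈ e, v ∈ c :=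
  mem_filter

@[simp]
lemma inEdges_empty (E : Finset (Sym2 V)) : inEdges E ∅ = ∅ :=
  filter_false_of_mem fun e _ h ↦ notMem_empty _ (h _ e.out_fst_mem)

lemma card_inEdges_union {E F : Finset (Sym2 V)} (h : Disjoint E F) (c : Finset V) :
    #(inEdges (E ∪ F) c) = #(inEdges E c) + #(inEdges F c) := by
  rw [inEdges, filter_union, card_union_of_disjoint (disjoint_filter_filter h)]
  rfl

lemma card_inEdges_singleton (x y : V) (c : Finset V) :
    #(inEdges {s(x, y)} c) = if x ∈ c ∧ y ∈ c then 1 else 0 := by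
  rw [inEdges, filter_singleton]
  split_ifs <;> simp_all

lemma inEdges_sdiff_of_forall_notMem {E : Finset (Sym2 V)} {t : Finset V}
    (hE : ∀ e ∈ E, ∀ v ∈ e, v ∉ t) (c : Finset V) : inEdges E (c \ t) = inEdges E c := by
  ext e
  simp only [mem_inEdges, mem_sdiff]
  exact and_congr_right fun he ↦ forall₂_congr fun v hv ↦ and_iff_left (hE e he v hv)

variable [Fintype V]

lemma mem_cliqueEdges {t : Finset V} {e : Sym2 V} :
    e ∈ cliqueEdges t ↔ ¬ e.IsDiag ∧ ∀ v ∈ e, v ∈ t := by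
  simp [cliqueEdges]

lemma cliqueEdges_eq_image (t : Finset V) :
    cliqueEdges t = t.offDiag.image (Function.uncurry Sym2.mk) := by
  ext ⟨x, y⟩
  simp only [mem_cliqueEdges, mem_image, mem_offDiag, Sym2.mk_isDiag_iff, Sym2.mem_iff,
    Prod.exists, Function.uncurry_apply_pair, Sym2.eq_iff]
  aesop

lemma card_cliqueEdges (t : Finset V) : #(cliqueEdges t) = (#t).choose 2 := by
  rw [cliqueEdges_eq_image, Sym2.card_image_offDiag]

lemma inEdges_cliqueEdges (t c : Finset V) :
    inEdges (cliqueEdges t) c = cliqueEdges (c ∩ t) := by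
  ext e
  simp only [mem_inEdges, mem_cliqueEdges, mem_inter]
  aesop

lemma disjoint_cliqueEdges {A B : Finset V} (h : Disjoint A B) :
    Disjoint (cliqueEdges A) (cliqueEdges B) :=
  disjoint_left.2 fun e hA hB ↦ disjoint_left.1 h
    ((mem_cliqueEdges.1 hA).2 _ e.out_fst_mem) ((mem_cliqueEdges.1 hB).2 _ e.out_fst_mem)

end Edges

section ClusterScore

variable {V : Type*} [DecidableEq V]

noncomputable def clusterScore (γ : ℝ) (E : Finset (Sym2 V)) (c : Finset V) : ℝ :=
  #(inEdges E c) - γ * (#c).choose 2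

@[simp]
lemma clusterScore_empty (γ : ℝ) (E : Finset (Sym2 V)) : clusterScore γ E ∅ = 0 := by
  simp [clusterScore]

lemma cpm_eq_sum_clusterScore [Fintype V] (γ : ℝ) (E : Finset (Sym2 V))
    (P : Finpartition (univ : Finset V)) :
    cpm γ E P = ∑ c ∈ P.parts, clusterScore γ E c :=
  rfl

end ClusterScore

section PairOfCliques

variable {V : Type*} [Fintype V] [DecidableEq V]

noncomputable def pairOfCliquesEdges (A B : Finset V) (a₀ b₀ : V) (Erest : Finset (Sym2 V)) :
    Finset (Sym2 V) :=
  cliqueEdges A ∪ cliqueEdges B ∪ {s(a₀, b₀)} ∪ Erest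

lemma pairOfCliquesEdges_comm (A B : Finset V) (a₀ b₀ : V) (Erest : Finset (Sym2 V)) :
    pairOfCliquesEdges A B a₀ b₀ Erest = pairOfCliquesEdges B A b₀ a₀ Erest := by
  rw [pairOfCliquesEdges, pairOfCliquesEdges, union_comm (cliqueEdges A), Sym2.eq_swap]

variable {A B : Finset V} {a₀ b₀ : V} {Erest : Finset (Sym2 V)}

lemma card_inEdges_pairOfCliquesEdges (hAB : Disjoint A B) (ha₀ : a₀ ∈ A) (hb₀ : b₀ ∈ B)
    (hrest : ∀ e ∈ Erest, ∀ v ∈ e, v ∉ A ∪ B) (c : Finset V) :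
    #(inEdges (pairOfCliquesEdges A B a₀ b₀ Erest) c) =
      (#(c ∩ A)).choose 2 + (#(c ∩ B)).choose 2 + (if a₀ ∈ c ∧ b₀ ∈ c then 1 else 0)
        + #(inEdges Erest c) := by
  have hbridge : s(a₀, b₀) ∉ cliqueEdges A ∪ cliqueEdges B := by
    simp only [mem_union, mem_cliqueEdges, Sym2.mem_iff, forall_eq_or_imp, forall_eq]
    exact fun h ↦ h.elim (fun h ↦ disjoint_left.1 hAB h.2.2 hb₀)
      (fun h ↦ disjoint_left.1 hAB ha₀ h.2.1)
  have hErest : Disjoint (cliqueEdges A ∪ cliqueEdges B ∪ {s(a₀, b₀)}) Erest := by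
    refine disjoint_right.2 fun e he hE ↦ ?_
    simp only [mem_union, mem_singleton, mem_cliqueEdges] at hE
    rcases hE with (hA | hB) | rfl
    · exact hrest e he _ e.out_fst_mem (mem_union_left _ (hA.2 _ e.out_fst_mem))
    · exact hrest e he _ e.out_fst_mem (mem_union_right _ (hB.2 _ e.out_fst_mem))
    · exact hrest _ he a₀ (Sym2.mem_mk_left _ _) (mem_union_left _ ha₀)
  rw [pairOfCliquesEdges, card_inEdges_union hErest,
    card_inEdges_union (disjoint_singleton_right.2 hbridge),
    card_inEdges_union (disjoint_cliqueEdges hAB), inEdges_cliqueEdges, inEdges_cliqueEdges,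
    card_cliqueEdges, card_cliqueEdges, card_inEdges_singleton]

lemma clusterScore_sub_clusterScore_sdiff (hAB : Disjoint A B) (ha₀ : a₀ ∈ A) (hb₀ : b₀ ∈ B)
    (hrest : ∀ e ∈ Erest, ∀ v ∈ e, v ∉ A ∪ B) (γ : ℝ) (c : Finset V) :
    clusterScore γ (pairOfCliquesEdges A B a₀ b₀ Erest) c
        - clusterScore γ (pairOfCliquesEdges A B a₀ b₀ Erest) (c \ (A ∪ B)) =
      (1 - γ) * ((#(c ∩ A)).choose 2 + (#(c ∩ B)).choose 2 : ℝ)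
        + (if a₀ ∈ c ∧ b₀ ∈ c then 1 else 0)
        - γ * (#(c ∩ A) * #(c ∩ B) + (#(c ∩ A) + #(c ∩ B)) * #(c \ (A ∪ B)) : ℝ) := by
  have houtside : c \ (A ∪ B) ∩ A = ∅ ∧ c \ (A ∪ B) ∩ B = ∅ ∧ a₀ ∉ c \ (A ∪ B) := by
    simp only [eq_empty_iff_forall_notMem, mem_inter, mem_sdiff, mem_union]
    tauto
  simp only [clusterScore, card_inEdges_pairOfCliquesEdges hAB ha₀ hb₀ hrest, houtside,
    card_empty, Nat.choose_zero_succ, false_and, if_false, inEdges_sdiff_of_forall_notMem hrest]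
  rw [card_eq_card_inter_add_card_inter_add_card_sdiff hAB c, Nat.choose_two_add,
    Nat.choose_two_add]
  push_cast
  split_ifs <;> ring

end PairOfCliques

lemma one_lt_mixing_cost {γ n x y z : ℝ} (hγ1 : γ < 1) (hn : 1 < γ * (2 * n - 1)) (hn2 : 2 ≤ n)
    (hx : 1 ≤ x) (hxn : x ≤ n) (hy : 1 ≤ y) (hyn : y ≤ n) (hz : 0 ≤ z) :
    1 < (1 - γ) * (x * (n - x) + y * (n - y)) + γ * (x * y + (x + y) * z) := by
  have hγ0 : 0 < γ := by nlinarith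
  have hlower : (1 - γ) * (2 * n - (x + y)) + γ * (x + y - 1) ≤
      (1 - γ) * (x * (n - x) + y * (n - y)) + γ * (x * y + (x + y) * z) := by
    nlinarith [mul_nonneg (sub_nonneg.2 hx) (sub_nonneg.2 hxn),
      mul_nonneg (sub_nonneg.2 hy) (sub_nonneg.2 hyn),
      mul_nonneg (sub_nonneg.2 hx) (sub_nonneg.2 hy),
      mul_nonneg (by linarith : (0 : ℝ) ≤ x + y) hz]
  -- the lower bound is affine in `x + y ∈ [2, 2n]` and exceeds `1` at both ends
  have hleft : 0 < (1 - γ) * (2 * n - 3) := by nlinarith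
  nlinarith [mul_nonneg (by linarith : (0 : ℝ) ≤ x + y - 2)
      (by linarith : (0 : ℝ) ≤ γ * (2 * n - 1) - 1),
    mul_nonneg (by linarith : (0 : ℝ) ≤ 2 * n - (x + y)) hleft.le]

lemma eq_and_eq_zero_of_mixing_cost_nonpos {γ a b x y z : ℝ} (hγ0 : 0 < γ) (hγ1 : γ < 1)
    (hx : 1 ≤ x) (hxa : x ≤ a) (hy : 0 ≤ y) (hyb : y ≤ b) (hz : 0 ≤ z)
    (h : (1 - γ) * (x * (a - x) + y * (b - y)) + γ * (x * y + (x + y) * z) ≤ 0) :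
    x = a ∧ y = 0 ∧ z = 0 := by
  have hγ1' : 0 < 1 - γ := sub_pos.2 hγ1
  have hxa' : 0 ≤ a - x := sub_nonneg.2 hxa
  have hyb' : 0 ≤ b - y := sub_nonneg.2 hyb
  have hxy : 0 < x + y := by linarith
  have t1 : 0 ≤ (1 - γ) * (x * (a - x)) := by positivity
  have t2 : 0 ≤ (1 - γ) * (y * (b - y)) := by positivity
  have t3 : 0 ≤ γ * (x * y) := by positivity
  have t4 : 0 ≤ γ * ((x + y) * z) := by positivity
  refine ⟨?_, ?_, ?_⟩
  · have : (1 - γ) * x * (a - x) ≤ 0 := by nlinarith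
    nlinarith [mul_pos hγ1' (by linarith : (0 : ℝ) < x)]
  · have : γ * x * y ≤ 0 := by nlinarith
    nlinarith [mul_pos hγ0 (by linarith : (0 : ℝ) < x)]
  · have : γ * (x + y) * z ≤ 0 := by nlinarith
    nlinarith [mul_pos hγ0 hxy]

section Optimal

variable {V : Type*} [Fintype V] [DecidableEq V] {A B : Finset V} {a₀ b₀ : V}
  {Erest : Finset (Sym2 V)} {γ : ℝ} {Γ : Finpartition (univ : Finset V)}

lemma mixing_cost_le_of_optimal (hγ0 : 0 ≤ γ) (hγ1 : γ ≤ 1) (hAB : Disjoint A B)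
    (ha₀ : a₀ ∈ A) (hb₀ : b₀ ∈ B) (hrest : ∀ e ∈ Erest, ∀ v ∈ e, v ∉ A ∪ B)
    (hopt : ∀ P, cpm γ (pairOfCliquesEdges A B a₀ b₀ Erest) P ≤
      cpm γ (pairOfCliquesEdges A B a₀ b₀ Erest) Γ)
    {c : Finset V} (hc : c ∈ Γ.parts) :
    (1 - γ) * (#(c ∩ A) * (#A - #(c ∩ A)) + #(c ∩ B) * (#B - #(c ∩ B)) : ℝ)
      + γ * (#(c ∩ A) * #(c ∩ B) + (#(c ∩ A) + #(c ∩ B)) * #(c \ (A ∪ B)) : ℝ)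
      ≤ if b₀ ∈ Γ.part a₀ then 1 else 0 := by
  set E := pairOfCliquesEdges A B a₀ b₀ Erest
  have hgain (c : Finset V) := clusterScore_sub_clusterScore_sdiff hAB ha₀ hb₀ hrest γ c
  have hcliqueA : clusterScore γ E A = (1 - γ) * (#A).choose 2 := by
    have hA : A \ (A ∪ B) = ∅ := sdiff_eq_empty_iff_subset.2 subset_union_left
    have hb₀A : b₀ ∉ A := disjoint_right.1 hAB hb₀
    simpa [hA, disjoint_iff_inter_eq_empty.1 hAB, hb₀A] using hgain A
  have hcliqueB : clusterScore γ E B = (1 - γ) * (#B).choose 2 := by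
    have hB : B \ (A ∪ B) = ∅ := sdiff_eq_empty_iff_subset.2 subset_union_right
    have ha₀B : a₀ ∉ B := disjoint_left.1 hAB ha₀
    simpa [hB, disjoint_iff_inter_eq_empty.1 hAB.symm, ha₀B] using hgain B
  have hsep : (1 - γ) * (#A).choose 2 + (1 - γ) * (#B).choose 2
      + ∑ c ∈ Γ.parts, clusterScore γ E (c \ (A ∪ B)) ≤ ∑ c ∈ Γ.parts, clusterScore γ E c := by
    rw [← hcliqueA, ← hcliqueB, ← Finpartition.sum_parts_separate Γ hAB ⟨a₀, ha₀⟩ ⟨b₀, hb₀⟩ _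
      (clusterScore_empty γ E)]
    exact hopt _
  have hgain_sum : ∑ c ∈ Γ.parts, clusterScore γ E c
      - ∑ c ∈ Γ.parts, clusterScore γ E (c \ (A ∪ B)) =
      (1 - γ) * (∑ d ∈ Γ.parts, ((#(d ∩ A)).choose 2 : ℝ)
          + ∑ d ∈ Γ.parts, ((#(d ∩ B)).choose 2 : ℝ))
        + (if b₀ ∈ Γ.part a₀ then 1 else 0)
        - γ * ∑ d ∈ Γ.parts,
          (#(d ∩ A) * #(d ∩ B) + (#(d ∩ A) + #(d ∩ B)) * #(d \ (A ∪ B)) : ℝ) := by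
    rw [← sum_sub_distrib, sum_congr rfl fun c _ ↦ hgain c,
      ← Γ.sum_ite_mem_and_mem (mem_univ a₀)]
    simp only [sum_sub_distrib, sum_add_distrib, ← mul_sum]
  have hA := Γ.sum_choose_two_card_inter_add_le (subset_univ A) hc
  have hB := Γ.sum_choose_two_card_inter_add_le (subset_univ B) hc
  have hmix := single_le_sum (f := fun c : Finset V ↦
      (#(c ∩ A) * #(c ∩ B) + (#(c ∩ A) + #(c ∩ B)) * #(c \ (A ∪ B)) : ℝ))
    (fun _ _ ↦ by positivity) hc
  have := mul_le_mul_of_nonneg_left (add_le_add hA hB) (sub_nonneg.2 hγ1)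
  have := mul_le_mul_of_nonneg_left hmix hγ0
  linarith

variable {n : ℕ}

lemma notMem_part_of_optimal (hγ0 : 0 < γ) (hγ1 : γ < 1) (hn : 1 < γ * (2 * (n : ℝ) - 1))
    (hAB : Disjoint A B) (hAcard : #A = n) (hBcard : #B = n) (ha₀ : a₀ ∈ A) (hb₀ : b₀ ∈ B)
    (hrest : ∀ e ∈ Erest, ∀ v ∈ e, v ∉ A ∪ B)
    (hopt : ∀ P, cpm γ (pairOfCliquesEdges A B a₀ b₀ Erest) P ≤
      cpm γ (pairOfCliquesEdges A B a₀ b₀ Erest) Γ) :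
    b₀ ∉ Γ.part a₀ := by
  intro hb₀c
  have hcost := mixing_cost_le_of_optimal hγ0.le hγ1.le hAB ha₀ hb₀ hrest hopt
    (Γ.part_mem.2 (mem_univ a₀))
  rw [if_pos hb₀c, hAcard, hBcard] at hcost
  have hn2 : 2 ≤ n := by
    by_contra! h
    interval_cases n <;> norm_num at hn <;> linarith
  refine (one_lt_mixing_cost hγ1 hn (by exact_mod_cast hn2) ?_ ?_ ?_ ?_
    (Nat.cast_nonneg _)).not_ge hcost
  · exact_mod_cast card_pos.2 ⟨a₀, mem_inter.2 ⟨Γ.mem_part_self.2 (mem_univ a₀), ha₀⟩⟩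
  · exact_mod_cast hAcard ▸ card_le_card inter_subset_right
  · exact_mod_cast card_pos.2 ⟨b₀, mem_inter.2 ⟨hb₀c, hb₀⟩⟩
  · exact_mod_cast hBcard ▸ card_le_card inter_subset_right

lemma part_eq_of_optimal (hγ0 : 0 < γ) (hγ1 : γ < 1) (hn : 1 < γ * (2 * (n : ℝ) - 1))
    (hAB : Disjoint A B) (hAcard : #A = n) (hBcard : #B = n) (ha₀ : a₀ ∈ A) (hb₀ : b₀ ∈ B)
    (hrest : ∀ e ∈ Erest, ∀ v ∈ e, v ∉ A ∪ B)
    (hopt : ∀ P, cpm γ (pairOfCliquesEdges A B a₀ b₀ Erest) P ≤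
      cpm γ (pairOfCliquesEdges A B a₀ b₀ Erest) Γ) :
    Γ.part a₀ = A := by
  have hcost := mixing_cost_le_of_optimal hγ0.le hγ1.le hAB ha₀ hb₀ hrest hopt
    (Γ.part_mem.2 (mem_univ a₀))
  rw [if_neg (notMem_part_of_optimal hγ0 hγ1 hn hAB hAcard hBcard ha₀ hb₀ hrest hopt)] at hcost
  obtain ⟨hx, hy, hz⟩ := eq_and_eq_zero_of_mixing_cost_nonpos hγ0 hγ1
    (by exact_mod_cast card_pos.2 ⟨a₀, mem_inter.2 ⟨Γ.mem_part_self.2 (mem_univ a₀), ha₀⟩⟩)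
    (by exact_mod_cast card_le_card inter_subset_right) (Nat.cast_nonneg _)
    (by exact_mod_cast card_le_card inter_subset_right) (Nat.cast_nonneg _) hcost
  norm_cast at hx hy hz
  have hAc : A ⊆ Γ.part a₀ := by
    rw [← eq_of_subset_of_card_le inter_subset_right hx.ge]
    exact inter_subset_left
  refine (eq_of_subset_of_card_le hAc ?_).symm
  rw [card_eq_card_inter_add_card_inter_add_card_sdiff hAB (Γ.part a₀)]
  omega

end Optimal

/-- Pair-of-Cliques axiom for CPM(γ).  Suppose `0 < γ < 1` with
`γ * (2n - 1) > 1`, and the network `N` has a component consisting of two disjoint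
`n`-cliques `A` and `B` joined by the single edge `s(a₀,b₀)` (the remaining edges avoid
`A ∪ B`).  Then in every CPM(γ)-optimal clustering `Γ`, every cluster meeting `A ∪ B` is a
subset of `A` or of `B`, and `A` and `B` are themselves clusters of `Γ`. -/
theorem stmt_6 {V : Type*} [Fintype V] [DecidableEq V]
    (γ : ℝ) (hγ0 : 0 < γ) (hγ1 : γ < 1)
    (n : ℕ) (hn : 1 < γ * (2 * (n : ℝ) - 1))
    (A B : Finset V) (hAB : Disjoint A B)
    (hAcard : A.card = n) (hBcard : B.card = n)
    (a₀ b₀ : V) (ha₀ : a₀ ∈ A) (hb₀ : b₀ ∈ B)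
    (Erest : Finset (Sym2 V))
    (hrest : ∀ e ∈ Erest, ¬ e.IsDiag ∧ ∀ v ∈ e, v ∉ A ∪ B)
    (E : Finset (Sym2 V))
    (hE : E = cliqueEdges A ∪ cliqueEdges B ∪ {s(a₀, b₀)} ∪ Erest)
    (Γ : Finpartition (univ : Finset V))
    (hopt : ∀ P : Finpartition (univ : Finset V), cpm γ E P ≤ cpm γ E Γ) :
    (∀ c ∈ Γ.parts, (c ∩ (A ∪ B)).Nonempty → c ⊆ A ∨ c ⊆ B) ∧
    A ∈ Γ.parts ∧ B ∈ Γ.parts := by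
  replace hE : E = pairOfCliquesEdges A B a₀ b₀ Erest := hE
  subst hE
  have hrestAB : ∀ e ∈ Erest, ∀ v ∈ e, v ∉ A ∪ B := fun e he ↦ (hrest e he).2
  have hrestBA : ∀ e ∈ Erest, ∀ v ∈ e, v ∉ B ∪ A := by simpa only [union_comm B A] using hrestAB
  have hA : Γ.part a₀ = A :=
    part_eq_of_optimal hγ0 hγ1 hn hAB hAcard hBcard ha₀ hb₀ hrestAB hopt
  have hB : Γ.part b₀ = B :=
    part_eq_of_optimal hγ0 hγ1 hn hAB.symm hBcard hAcard hb₀ ha₀ hrestBA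
      (by simpa only [pairOfCliquesEdges_comm A B] using hopt)
  have hAmem : A ∈ Γ.parts := hA ▸ Γ.part_mem.2 (mem_univ a₀)
  have hBmem : B ∈ Γ.parts := hB ▸ Γ.part_mem.2 (mem_univ b₀)
  refine ⟨fun c hc ⟨v, hv⟩ ↦ ?_, hAmem, hBmem⟩
  rw [mem_inter, mem_union] at hv
  rcases hv with ⟨hvc, hvA | hvB⟩
  · exact .inl (Γ.eq_of_mem_parts hc hAmem hvc hvA).le
  · exact .inr (Γ.eq_of_mem_parts hc hBmem hvc hvB).le
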